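/- arXiv:2009.07014 — 2 statements merged into one kernel-verified Lean document; each statement's English description precedes it below -/
import Mathlib

section
/- Let E be a real Banach lattice and F a real Banach space. The set of almost Dunford–Pettis operators from E to F is a closed linear subspace of the space of all continuous linear operators from E to F with the operator norm: it contains 0, it is closed under addition and scalar multiplication, and if a sequence (u_k) of almost Dunford–Pettis operators converges in operator norm to u, then u is almost Dunford–Pettis. -/
open Filter Topology

/-!
For a fixed bounded sequence `x`, the operators `u` with `u (x n) → 0` form a submodule, and it is
closed because the evaluations `u ↦ u (x n)` are uniformly Lipschitz in `n`. Weakly null sequences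
are bounded by the uniform boundedness principle applied in the bidual, so the almost
Dunford–Pettis operators are an intersection of such closed submodules.
-/

/-- A continuous linear operator `u : E → F` from a Banach lattice `E` to a Banach
space `F` is almost Dunford–Pettis if `‖u (x n)‖ → 0` for every weakly null sequence
`(x n)` in `E` whose terms are pairwise disjoint. -/
def AlmostDunfordPettis {E F : Type*} [NormedAddCommGroup E] [Lattice E] [IsOrderedAddMonoid E] [HasSolidNorm E] [NormedSpace ℝ E]
    [NormedAddCommGroup F] [NormedSpace ℝ F] (u : E →L[ℝ] F) : Prop :=
  ∀ x : ℕ → E,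
    (∀ f : E →L[ℝ] ℝ, Tendsto (fun n => f (x n)) atTop (𝓝 0)) →
    (∀ m n, m ≠ n → |x m| ⊓ |x n| = 0) →
    Tendsto (fun n => ‖u (x n)‖) atTop (𝓝 0)

open Bornology Set

theorem isBounded_range_of_forall_isBounded_range_dual {𝕜 E ι : Type*} [RCLike 𝕜]
    [NormedAddCommGroup E] [NormedSpace 𝕜 E] {x : ι → E}
    (hx : ∀ f : StrongDual 𝕜 E, IsBounded (range fun i => f (x i))) :
    IsBounded (range x) := by
  let j := NormedSpace.inclusionInDoubleDualLi (E := E) 𝕜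
  obtain ⟨C, hC⟩ := banach_steinhaus (g := fun i => (j (x i) : StrongDual 𝕜 (StrongDual 𝕜 E)))
    fun f => (hx f).exists_norm_le.imp fun _ hC i => hC _ (mem_range_self i)
  exact isBounded_iff_forall_norm_le.2 ⟨C, forall_mem_range.2 fun i => j.norm_map (x i) ▸ hC i⟩

namespace ContinuousLinearMap

variable {𝕜 E F : Type*} [NontriviallyNormedField 𝕜] [SeminormedAddCommGroup E] [NormedSpace 𝕜 E]
  [SeminormedAddCommGroup F] [NormedSpace 𝕜 F]

def nullAlong (x : ℕ → E) : Submodule 𝕜 (E →L[𝕜] F) where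
  carrier := {u | Tendsto (fun n => u (x n)) atTop (𝓝 0)}
  zero_mem' := by simpa using tendsto_const_nhds
  add_mem' hu hv := by simpa using hu.add hv
  smul_mem' c _ hu := by simpa using hu.const_smul c

theorem mem_nullAlong {x : ℕ → E} {u : E →L[𝕜] F} :
    u ∈ nullAlong x ↔ Tendsto (fun n => u (x n)) atTop (𝓝 0) :=
  Iff.rfl

theorem isClosed_nullAlong {x : ℕ → E} (hx : IsBounded (range x)) :
    IsClosed (nullAlong (𝕜 := 𝕜) (F := F) x : Set (E →L[𝕜] F)) := by
  obtain ⟨C, hC⟩ := hx.exists_norm_le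
  have hLip : ∀ n, LipschitzWith C.toNNReal fun u : E →L[𝕜] F => u (x n) := fun n =>
    AddMonoidHomClass.lipschitz_of_bound (apply 𝕜 F (x n)) C fun u =>
      (u.le_opNorm _).trans (by rw [mul_comm]; gcongr; exact hC _ (mem_range_self n))
  exact (LipschitzWith.uniformEquicontinuous _ _ hLip).equicontinuous.isClosed_setOfPred_tendsto
    continuous_const

end ContinuousLinearMap

section AlmostDunfordPettis

variable (E F : Type*) [NormedAddCommGroup E] [Lattice E] [NormedSpace ℝ E] [NormedAddCommGroup F]
  [NormedSpace ℝ F]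

noncomputable def almostDunfordPettisSubmodule : Submodule ℝ (E →L[ℝ] F) :=
  ⨅ (x : ℕ → E) (_ : ∀ f : E →L[ℝ] ℝ, Tendsto (fun n => f (x n)) atTop (𝓝 0))
    (_ : ∀ m n, m ≠ n → |x m| ⊓ |x n| = 0), ContinuousLinearMap.nullAlong x

variable {E F}

theorem mem_almostDunfordPettisSubmodule [IsOrderedAddMonoid E] [HasSolidNorm E] {u : E →L[ℝ] F} :
    u ∈ almostDunfordPettisSubmodule E F ↔ AlmostDunfordPettis u := by
  simp only [almostDunfordPettisSubmodule, Submodule.mem_iInf,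
    ContinuousLinearMap.mem_nullAlong, AlmostDunfordPettis, ← tendsto_zero_iff_norm_tendsto_zero]

theorem isClosed_almostDunfordPettisSubmodule :
    IsClosed (almostDunfordPettisSubmodule E F : Set (E →L[ℝ] F)) := by
  simp only [almostDunfordPettisSubmodule, Submodule.coe_iInf]
  exact isClosed_iInter fun x => isClosed_iInter fun hx => isClosed_iInter fun _ =>
    ContinuousLinearMap.isClosed_nullAlong <| isBounded_range_of_forall_isBounded_range_dual
      fun f => Metric.isBounded_range_of_tendsto _ (hx f)

end AlmostDunfordPettis

theorem almostDunfordPettis_closed_subspace_general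
    (E F : Type*)
    [NormedAddCommGroup E] [Lattice E] [IsOrderedAddMonoid E] [HasSolidNorm E] [NormedSpace ℝ E]
    [NormedAddCommGroup F] [NormedSpace ℝ F] :
    AlmostDunfordPettis (0 : E →L[ℝ] F) ∧
    (∀ u v : E →L[ℝ] F, AlmostDunfordPettis u → AlmostDunfordPettis v →
      AlmostDunfordPettis (u + v)) ∧
    (∀ (a : ℝ) (u : E →L[ℝ] F), AlmostDunfordPettis u →
      AlmostDunfordPettis (a • u)) ∧
    (∀ (u : ℕ → E →L[ℝ] F) (v : E →L[ℝ] F), (∀ k, AlmostDunfordPettis (u k)) →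
      Tendsto (fun k => ‖u k - v‖) atTop (𝓝 0) → AlmostDunfordPettis v) := by
  simp only [← mem_almostDunfordPettisSubmodule]
  set S := almostDunfordPettisSubmodule E F
  exact ⟨S.zero_mem, fun u v => S.add_mem, fun a u => S.smul_mem a,
    fun u v hu hlim => isClosed_almostDunfordPettisSubmodule.mem_of_tendsto
      (tendsto_iff_norm_sub_tendsto_zero.2 hlim) (.of_forall hu)⟩

/-- The almost Dunford–Pettis operators from a Banach lattice `E` to a Banach space
`F` form a closed linear subspace of the space of continuous linear operators with
the operator norm: the set contains `0`, is closed under addition and scalar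
multiplication, and is closed under limits in the operator norm. -/
theorem almostDunfordPettis_closed_subspace
    (E F : Type*)
    [NormedAddCommGroup E] [Lattice E] [IsOrderedAddMonoid E] [HasSolidNorm E] [NormedSpace ℝ E] [CompleteSpace E]
    [NormedAddCommGroup F] [NormedSpace ℝ F] [CompleteSpace F] :
    AlmostDunfordPettis (0 : E →L[ℝ] F) ∧
    (∀ u v : E →L[ℝ] F, AlmostDunfordPettis u → AlmostDunfordPettis v →
      AlmostDunfordPettis (u + v)) ∧
    (∀ (a : ℝ) (u : E →L[ℝ] F), AlmostDunfordPettis u →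
      AlmostDunfordPettis (a • u)) ∧
    (∀ (u : ℕ → E →L[ℝ] F) (v : E →L[ℝ] F), (∀ k, AlmostDunfordPettis (u k)) →
      Tendsto (fun k => ‖u k - v‖) atTop (𝓝 0) → AlmostDunfordPettis v) :=
  almostDunfordPettis_closed_subspace_general E F
end

section
/- Let E and F be real Banach lattices and suppose that both dual spaces E* and F* have the positive Schur property. Let (T_n) be a sequence of positive continuous linear operators from E to F* such that the adjoints T_n* : F** → E* converge to 0 in the weak operator topology, i.e. x**(T_n*(y**)) → 0 for every x** ∈ E** and every y** ∈ F**. Then ‖T_n‖ → 0 in operator norm. -/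
/-!
For `Ψ ∈ F**` positive on the cone of `F*`, the functionals `Ψ ∘ T n` are positive and weakly null
in `E*`, hence norm null by the positive Schur property of `E*`. Applied in `F`, the
Riesz–Kantorovich formula `f⁺(y) = sup {f u | 0 ≤ u ≤ y}` shows that the positive cone of `F*` has
the Riesz decomposition property; applied once more in `F*`, it writes every `Ψ ∈ F**` as a
difference of such positive functionals, so `‖Ψ ∘ T n‖ → 0` for all `Ψ`. For a positive sequence
`x n` in the unit ball of `E` this gives `|Ψ (T n (x n))| ≤ ‖Ψ ∘ T n‖ → 0`: the positive functionals
`T n (x n)` are weakly null, hence norm null by the positive Schur property of `F*`. Finally,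
`x = x⁺ - x⁻` bounds `‖T n‖` by twice its supremum over positive vectors of the unit ball.
-/

open Filter Topology NormedSpace

/-- A continuous linear functional on a Banach lattice is positive if it takes
nonnegative values on the positive cone. -/
def IsPosFunctional {E : Type*} [NormedAddCommGroup E] [Lattice E] [HasSolidNorm E] [IsOrderedAddMonoid E] [NormedSpace ℝ E]
    (f : StrongDual ℝ E) : Prop :=
  ∀ x : E, 0 ≤ x → 0 ≤ f x

/-- The dual `E*` of a Banach lattice `E` has the positive Schur property if every
sequence of positive functionals that is weakly null (tested against all elements
of the bidual `E**`) is norm null. -/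
def DualHasPositiveSchurProperty (E : Type*) [NormedAddCommGroup E] [Lattice E] [HasSolidNorm E] [IsOrderedAddMonoid E]
    [NormedSpace ℝ E] : Prop :=
  ∀ f : ℕ → StrongDual ℝ E, (∀ n, IsPosFunctional (f n)) →
    (∀ Φ : StrongDual ℝ (StrongDual ℝ E), Tendsto (fun n => Φ (f n)) atTop (𝓝 0)) →
    Tendsto (fun n => ‖f n‖) atTop (𝓝 0)

open scoped NNReal Pointwise

namespace AddSubmonoid

section Cone

variable {X : Type*} [AddCommGroup X] (C : AddSubmonoid X)

/-- The order interval `[0, a]` for the order whose positive cone is `C`. -/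
def interval (a : X) : Set X := {h | h ∈ C ∧ a - h ∈ C}

def HasRieszDecomposition : Prop :=
  ∀ a ∈ C, ∀ b ∈ C, C.interval (a + b) ⊆ C.interval a + C.interval b

variable {C}

lemma zero_mem_interval {a : X} (ha : a ∈ C) : 0 ∈ C.interval a :=
  ⟨C.zero_mem, by rwa [sub_zero]⟩

lemma self_mem_interval {a : X} (ha : a ∈ C) : a ∈ C.interval a :=
  ⟨ha, by rw [sub_self]; exact C.zero_mem⟩

lemma interval_add (hC : C.HasRieszDecomposition) {a b : X} (ha : a ∈ C) (hb : b ∈ C) :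
    C.interval (a + b) = C.interval a + C.interval b := by
  refine (hC a ha b hb).antisymm ?_
  rintro _ ⟨h₁, ⟨hh₁, hah₁⟩, h₂, ⟨hh₂, hbh₂⟩, rfl⟩
  refine ⟨C.add_mem hh₁ hh₂, ?_⟩
  rw [add_sub_add_comm]
  exact C.add_mem hah₁ hbh₂

end Cone

section NormedCone

variable {X : Type*} [NormedAddCommGroup X] [NormedSpace ℝ X] (C : AddSubmonoid X)

def IsNormalCone (N : ℝ≥0) : Prop :=
  ∀ a ∈ C, ∀ h ∈ C.interval a, ‖h‖ ≤ N * ‖a‖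

def IsGeneratingCone (K : ℝ≥0) : Prop :=
  ∀ x, ∃ a ∈ C, ∃ b ∈ C, x = a - b ∧ ‖a‖ + ‖b‖ ≤ K * ‖x‖

def dualCone : AddSubmonoid (StrongDual ℝ X) where
  carrier := {f | ∀ a ∈ C, 0 ≤ f a}
  add_mem' hf hg a ha := add_nonneg (hf a ha) (hg a ha)
  zero_mem' _ _ := le_rfl

variable {C}

lemma mem_dualCone {f : StrongDual ℝ X} : f ∈ C.dualCone ↔ ∀ a ∈ C, 0 ≤ f a := Iff.rfl

lemma sub_mem_dualCone_iff {f g : StrongDual ℝ X} :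
    f - g ∈ C.dualCone ↔ ∀ a ∈ C, g a ≤ f a := by
  simp only [mem_dualCone, sub_apply, sub_nonneg]

theorem IsGeneratingCone.exists_strongDual_eqOn {K : ℝ≥0} (hgen : C.IsGeneratingCone K)
    {ρ : X → ℝ} {M : ℝ} (hM : 0 ≤ M) (hadd : ∀ a ∈ C, ∀ b ∈ C, ρ (a + b) = ρ a + ρ b)
    (hρ : ∀ a ∈ C, |ρ a| ≤ M * ‖a‖) :
    ∃ L : StrongDual ℝ X, (∀ a ∈ C, L a = ρ a) ∧ ‖L‖ ≤ M * K := by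
  choose u hu v hv huv hnorm using hgen
  have hρ0 : ρ 0 = 0 := by simpa using hadd 0 C.zero_mem 0 C.zero_mem
  have hwd : ∀ {x a b}, a ∈ C → b ∈ C → x = a - b →
      ρ (u x) - ρ (v x) = ρ a - ρ b := by
    intro x a b ha hb hx
    have h : u x + b = a + v x := by rw [← sub_eq_sub_iff_add_eq_add, ← huv, hx]
    have := congrArg ρ h
    rw [hadd _ (hu x) _ hb, hadd _ ha _ (hv x)] at this
    linarith
  let g : X →+ ℝ :=
    { toFun := fun x => ρ (u x) - ρ (v x)
      map_zero' := by rw [hwd C.zero_mem C.zero_mem (sub_zero 0).symm, sub_self]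
      map_add' := fun x y => by
        have hxy : x + y = (u x + u y) - (v x + v y) := by
          rw [add_sub_add_comm, ← huv, ← huv]
        rw [hwd (C.add_mem (hu x) (hu y)) (C.add_mem (hv x) (hv y)) hxy,
          hadd _ (hu x) _ (hu y), hadd _ (hv x) _ (hv y)]
        ring }
  have hg : ∀ x, ‖g x‖ ≤ M * K * ‖x‖ := fun x => calc
    ‖g x‖ = |ρ (u x) - ρ (v x)| := rfl
    _ ≤ |ρ (u x)| + |ρ (v x)| := abs_sub _ _
    _ ≤ M * ‖u x‖ + M * ‖v x‖ := add_le_add (hρ _ (hu x)) (hρ _ (hv x))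
    _ ≤ M * K * ‖x‖ := by
      rw [← mul_add, mul_assoc]
      exact mul_le_mul_of_nonneg_left (hnorm x) hM
  let L := g.toRealLinearMap (AddMonoidHomClass.continuous_of_bound g _ hg)
  refine ⟨L, fun a ha => ?_, L.opNorm_le_bound (by positivity) hg⟩
  change ρ (u a) - ρ (v a) = ρ a
  rw [hwd ha C.zero_mem (sub_zero a).symm, hρ0, sub_zero]

/-- Riesz–Kantorovich: `p a = sup {φ h | h ∈ [0, a]}` defines the supremum of `φ` and `0` in the
order of the dual cone. -/
theorem exists_dual_posPart (hR : C.HasRieszDecomposition) {N K : ℝ≥0} (hN : C.IsNormalCone N)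
    (hK : C.IsGeneratingCone K) (φ : StrongDual ℝ X) :
    ∃ p ∈ C.dualCone, p - φ ∈ C.dualCone ∧
      (∀ q ∈ C.dualCone, q - φ ∈ C.dualCone → q - p ∈ C.dualCone) ∧ ‖p‖ ≤ ‖φ‖ * N * K := by
  set ρ : X → ℝ := fun a => sSup (φ '' C.interval a)
  have hφ : ∀ a ∈ C, ∀ h ∈ C.interval a, φ h ≤ ‖φ‖ * N * ‖a‖ := fun a ha h hh => calc
    φ h ≤ ‖φ‖ * ‖h‖ := (le_abs_self _).trans (φ.le_opNorm h)
    _ ≤ ‖φ‖ * (N * ‖a‖) := mul_le_mul_of_nonneg_left (hN a ha h hh) (norm_nonneg φ)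
    _ = ‖φ‖ * N * ‖a‖ := (mul_assoc _ _ _).symm
  have hne : ∀ a ∈ C, (φ '' C.interval a).Nonempty := fun a ha =>
    ⟨φ 0, 0, zero_mem_interval ha, rfl⟩
  have hbdd : ∀ a ∈ C, BddAbove (φ '' C.interval a) := fun a ha =>
    ⟨_, by rintro _ ⟨h, hh, rfl⟩; exact hφ a ha h hh⟩
  have hle : ∀ a ∈ C, ∀ h ∈ C.interval a, φ h ≤ ρ a := fun a ha h hh =>
    le_csSup (hbdd a ha) ⟨h, hh, rfl⟩
  have hnonneg : ∀ a ∈ C, 0 ≤ ρ a := fun a ha => by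
    simpa using hle a ha 0 (zero_mem_interval ha)
  have hbound : ∀ a ∈ C, |ρ a| ≤ ‖φ‖ * N * ‖a‖ := fun a ha => by
    rw [abs_of_nonneg (hnonneg a ha)]
    exact csSup_le (hne a ha) (by rintro _ ⟨h, hh, rfl⟩; exact hφ a ha h hh)
  have hadd : ∀ a ∈ C, ∀ b ∈ C, ρ (a + b) = ρ a + ρ b := fun a ha b hb => by
    simp only [ρ]
    rw [interval_add hR ha hb, Set.image_add]
    exact csSup_add (hne a ha) (hbdd a ha) (hne b hb) (hbdd b hb)
  obtain ⟨p, hp, hpnorm⟩ := hK.exists_strongDual_eqOn (by positivity) hadd hbound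
  refine ⟨p, fun a ha => hp a ha ▸ hnonneg a ha, ?_, fun q hq hqφ => ?_, hpnorm⟩
  · rw [sub_mem_dualCone_iff]
    intro a ha
    rw [hp a ha]
    exact hle a ha a (self_mem_interval ha)
  · rw [sub_mem_dualCone_iff] at hqφ ⊢
    intro a ha
    rw [hp a ha]
    refine csSup_le (hne a ha) ?_
    rintro _ ⟨h, ⟨hh, hah⟩, rfl⟩
    have hqa : q h ≤ q a := by simpa [map_sub] using hq (a - h) hah
    exact (hqφ h hh).trans hqa

theorem hasRieszDecomposition_dualCone (hR : C.HasRieszDecomposition) {N K : ℝ≥0}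
    (hN : C.IsNormalCone N) (hK : C.IsGeneratingCone K) : C.dualCone.HasRieszDecomposition := by
  rintro f₁ hf₁ f₂ hf₂ g ⟨hg, hfg⟩
  -- `g₁ = g ⊓ f₁ = f₁ - (f₁ - g)⁺`
  obtain ⟨p, hp, hpφ, hleast, -⟩ := exists_dual_posPart hR hN hK (f₁ - g)
  have hp₁ : f₁ - p ∈ C.dualCone := hleast f₁ hf₁ (by rwa [sub_sub_cancel])
  have hp₂ : f₁ + f₂ - g - p ∈ C.dualCone :=
    hleast _ hfg (by rwa [show f₁ + f₂ - g - (f₁ - g) = f₂ by abel])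
  refine ⟨f₁ - p, ⟨hp₁, by rwa [sub_sub_cancel]⟩, g - (f₁ - p), ⟨?_, ?_⟩, add_sub_cancel _ _⟩
  · rwa [show g - (f₁ - p) = p - (f₁ - g) by abel]
  · rwa [show f₂ - (g - (f₁ - p)) = f₁ + f₂ - g - p by abel]

theorem IsGeneratingCone.isNormalCone_dualCone {K : ℝ≥0} (hK : C.IsGeneratingCone K) :
    C.dualCone.IsNormalCone K := by
  rintro f - h ⟨hh, hfh⟩
  rw [sub_mem_dualCone_iff] at hfh
  refine h.opNorm_le_bound (by positivity) fun x => ?_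
  obtain ⟨a, ha, b, hb, rfl, hab⟩ := hK x
  calc ‖h (a - b)‖ = |h a - h b| := by rw [map_sub]; rfl
    _ ≤ |h a| + |h b| := abs_sub _ _
    _ = h a + h b := by rw [abs_of_nonneg (hh a ha), abs_of_nonneg (hh b hb)]
    _ ≤ f a + f b := add_le_add (hfh a ha) (hfh b hb)
    _ ≤ ‖f‖ * ‖a‖ + ‖f‖ * ‖b‖ :=
      add_le_add ((le_abs_self _).trans (f.le_opNorm a)) ((le_abs_self _).trans (f.le_opNorm b))
    _ ≤ K * ‖f‖ * ‖a - b‖ := by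
      rw [← mul_add, mul_comm (K : ℝ), mul_assoc]
      exact mul_le_mul_of_nonneg_left hab (norm_nonneg f)

theorem isGeneratingCone_dualCone (hR : C.HasRieszDecomposition) {N K : ℝ≥0}
    (hN : C.IsNormalCone N) (hK : C.IsGeneratingCone K) :
    C.dualCone.IsGeneratingCone (2 * N * K + 1) := by
  intro f
  obtain ⟨p, hp, hpf, -, hpnorm⟩ := exists_dual_posPart hR hN hK f
  refine ⟨p, hp, p - f, hpf, (sub_sub_cancel p f).symm, ?_⟩
  calc ‖p‖ + ‖p - f‖ ≤ ‖p‖ + (‖p‖ + ‖f‖) := add_le_add le_rfl (norm_sub_le p f)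
    _ ≤ ‖f‖ * N * K + (‖f‖ * N * K + ‖f‖) := by gcongr
    _ = (2 * N * K + 1 : ℝ≥0) * ‖f‖ := by push_cast; ring

end NormedCone

end AddSubmonoid

section BanachLattice

variable {E : Type*} [NormedAddCommGroup E] [Lattice E] [HasSolidNorm E] [IsOrderedAddMonoid E]

lemma norm_posPart_le (x : E) : ‖x⁺‖ ≤ ‖x‖ := by
  apply HasSolidNorm.solid
  rw [abs_of_nonneg (posPart_nonneg x), ← posPart_add_negPart x]
  exact le_add_of_nonneg_right (negPart_nonneg x)

lemma norm_negPart_le (x : E) : ‖x⁻‖ ≤ ‖x‖ := by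
  apply HasSolidNorm.solid
  rw [abs_of_nonneg (negPart_nonneg x), ← posPart_add_negPart x]
  exact le_add_of_nonneg_left (posPart_nonneg x)

namespace AddSubmonoid

theorem hasRieszDecomposition_nonneg {L : Type*} [AddCommGroup L] [Lattice L]
    [IsOrderedAddMonoid L] : (nonneg L).HasRieszDecomposition := by
  rintro a ha b hb h ⟨hh, hab⟩
  have hhb : h - b ≤ h ⊓ a :=
    le_inf (sub_le_self h hb) (sub_le_iff_le_add.2 (sub_nonneg.1 hab))
  exact ⟨h ⊓ a, ⟨le_inf hh ha, sub_nonneg.2 inf_le_right⟩,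
    h - h ⊓ a, ⟨sub_nonneg.2 inf_le_left, sub_nonneg.2 (sub_le_comm.1 hhb)⟩, add_sub_cancel _ _⟩

theorem isNormalCone_nonneg : (nonneg E).IsNormalCone 1 := by
  rintro a ha h ⟨hh, hah⟩
  rw [NNReal.coe_one, one_mul]
  apply HasSolidNorm.solid
  rw [abs_of_nonneg hh, abs_of_nonneg ha]
  exact sub_nonneg.1 hah

theorem isGeneratingCone_nonneg : (nonneg E).IsGeneratingCone 2 := fun x =>
  ⟨x⁺, posPart_nonneg x, x⁻, negPart_nonneg x, (posPart_sub_negPart x).symm, by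
    rw [NNReal.coe_two, two_mul]
    exact add_le_add (norm_posPart_le x) (norm_negPart_le x)⟩

theorem exists_eq_sub_mem_dualCone_dualCone_nonneg [NormedSpace ℝ E]
    (Ψ : StrongDual ℝ (StrongDual ℝ E)) :
    ∃ Ψ₁ ∈ (nonneg E).dualCone.dualCone, ∃ Ψ₂ ∈ (nonneg E).dualCone.dualCone, Ψ = Ψ₁ - Ψ₂ := by
  have hR : (nonneg E).HasRieszDecomposition := hasRieszDecomposition_nonneg
  obtain ⟨Ψ₁, hΨ₁, Ψ₂, hΨ₂, hΨ, -⟩ := isGeneratingCone_dualCone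
    (hasRieszDecomposition_dualCone hR isNormalCone_nonneg isGeneratingCone_nonneg)
    isGeneratingCone_nonneg.isNormalCone_dualCone
    (isGeneratingCone_dualCone hR isNormalCone_nonneg isGeneratingCone_nonneg) Ψ
  exact ⟨Ψ₁, hΨ₁, Ψ₂, hΨ₂, hΨ⟩

end AddSubmonoid

variable [NormedSpace ℝ E] {Y : Type*} [NormedAddCommGroup Y] [NormedSpace ℝ Y]

theorem ContinuousLinearMap.exists_nonneg_norm_le_one_lt_two_mul_norm_apply (S : E →L[ℝ] Y)
    {r : ℝ} (hr : r < ‖S‖) : ∃ x, 0 ≤ x ∧ ‖x‖ ≤ 1 ∧ r < 2 * ‖S x‖ := by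
  obtain ⟨y, hy, hry⟩ := S.exists_lt_apply_of_lt_opNorm hr
  have hsplit : ‖S y‖ ≤ ‖S y⁺‖ + ‖S y⁻‖ := calc
    ‖S y‖ = ‖S y⁺ - S y⁻‖ := by rw [← map_sub, posPart_sub_negPart]
    _ ≤ ‖S y⁺‖ + ‖S y⁻‖ := norm_sub_le _ _
  rcases le_total ‖S y⁺‖ ‖S y⁻‖ with h | h
  · exact ⟨y⁻, negPart_nonneg y, (norm_negPart_le y).trans hy.le, by linarith⟩
  · exact ⟨y⁺, posPart_nonneg y, (norm_posPart_le y).trans hy.le, by linarith⟩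

theorem tendsto_opNorm_zero_of_tendsto_norm_apply_nonneg (T : ℕ → E →L[ℝ] Y)
    (hT : ∀ x : ℕ → E, (∀ n, 0 ≤ x n) → (∀ n, ‖x n‖ ≤ 1) →
      Tendsto (fun n => ‖T n (x n)‖) atTop (𝓝 0)) :
    Tendsto (fun n => ‖T n‖) atTop (𝓝 0) := by
  have hr : ∀ n : ℕ, ‖T n‖ - 1 / (n + 1) < ‖T n‖ := fun n =>
    sub_lt_self _ Nat.one_div_pos_of_nat
  choose x hx0 hx1 hx using fun n =>
    (T n).exists_nonneg_norm_le_one_lt_two_mul_norm_apply (hr n)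
  have hbound := ((hT x hx0 hx1).const_mul 2).add tendsto_one_div_add_atTop_nhds_zero_nat
  rw [mul_zero, add_zero] at hbound
  exact squeeze_zero (fun n => norm_nonneg _) (fun n => by linarith [hx n]) hbound

end BanachLattice

theorem opNorm_tendsto_zero_of_dualPSP_general
    (E F : Type*)
    [NormedAddCommGroup E] [Lattice E] [HasSolidNorm E] [IsOrderedAddMonoid E] [NormedSpace ℝ E]
    [NormedAddCommGroup F] [Lattice F] [HasSolidNorm F] [IsOrderedAddMonoid F] [NormedSpace ℝ F]
    (hE : DualHasPositiveSchurProperty E) (hF : DualHasPositiveSchurProperty F)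
    (T : ℕ → E →L[ℝ] StrongDual ℝ F)
    (hTpos : ∀ n (x : E), 0 ≤ x → IsPosFunctional (T n x))
    (hwot : ∀ (Φ : StrongDual ℝ (StrongDual ℝ E)) (Ψ : StrongDual ℝ (StrongDual ℝ F)),
      Tendsto (fun n => Φ (Ψ.comp (T n) : StrongDual ℝ E)) atTop (𝓝 0)) :
    Tendsto (fun n => ‖T n‖) atTop (𝓝 0) := by
  have hpos : ∀ Ψ ∈ (AddSubmonoid.nonneg F).dualCone.dualCone,
      Tendsto (fun n => ‖Ψ.comp (T n)‖) atTop (𝓝 0) := fun Ψ hΨ =>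
    hE _ (fun n x hx => hΨ _ (hTpos n x hx)) (fun Φ => hwot Φ Ψ)
  have hcomp : ∀ Ψ : StrongDual ℝ (StrongDual ℝ F),
      Tendsto (fun n => ‖Ψ.comp (T n)‖) atTop (𝓝 0) := by
    intro Ψ
    obtain ⟨Ψ₁, hΨ₁, Ψ₂, hΨ₂, rfl⟩ := AddSubmonoid.exists_eq_sub_mem_dualCone_dualCone_nonneg Ψ
    refine squeeze_zero (fun n => norm_nonneg _) (fun n => ?_)
      (by simpa using (hpos Ψ₁ hΨ₁).add (hpos Ψ₂ hΨ₂))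
    rw [ContinuousLinearMap.sub_comp]
    exact norm_sub_le _ _
  refine tendsto_opNorm_zero_of_tendsto_norm_apply_nonneg T fun x hx0 hx1 =>
    hF _ (fun n => hTpos n _ (hx0 n)) fun Ψ => squeeze_zero_norm (fun n => ?_) (hcomp Ψ)
  calc ‖Ψ (T n (x n))‖ ≤ ‖Ψ.comp (T n)‖ * ‖x n‖ := (Ψ.comp (T n)).le_opNorm (x n)
    _ ≤ ‖Ψ.comp (T n)‖ := mul_le_of_le_one_right (norm_nonneg _) (hx1 n)

/-- If `E*` and `F*` have the positive Schur property and `(T n)` is a sequence of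
positive operators `E → F*` whose adjoints `T n * : F** → E*`,
`(T n * y**) x = y** (T n x)`, converge to `0` in the weak operator topology, then
`‖T n‖ → 0` in the operator norm. -/
theorem opNorm_tendsto_zero_of_dualPSP
    (E F : Type*)
    [NormedAddCommGroup E] [Lattice E] [HasSolidNorm E] [IsOrderedAddMonoid E] [NormedSpace ℝ E] [CompleteSpace E]
    [NormedAddCommGroup F] [Lattice F] [HasSolidNorm F] [IsOrderedAddMonoid F] [NormedSpace ℝ F] [CompleteSpace F]
    (hE : DualHasPositiveSchurProperty E) (hF : DualHasPositiveSchurProperty F)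
    (T : ℕ → E →L[ℝ] StrongDual ℝ F)
    (hTpos : ∀ n (x : E), 0 ≤ x → IsPosFunctional (T n x))
    (hwot : ∀ (Φ : StrongDual ℝ (StrongDual ℝ E)) (Ψ : StrongDual ℝ (StrongDual ℝ F)),
      Tendsto (fun n => Φ (Ψ.comp (T n) : StrongDual ℝ E)) atTop (𝓝 0)) :
    Tendsto (fun n => ‖T n‖) atTop (𝓝 0) :=
  opNorm_tendsto_zero_of_dualPSP_general E F hE hF T hTpos hwot
end
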